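/- The functions F₁ and F₂ defined above also satisfy the second recurrence: ((m₁₂−m₁₁+1)/(m₁₂−m₂₂+1))F₁(m₁₂,m₂₂)² − ((m₂₂−m₁₁)/(m₁₂−m₂₂+1))F₂(m₁₂,m₂₂)² + ((m₁₂−m₁₁)/(m₁₂−m₂₂))F₁(m₁₂−1,m₂₂)² − ((m₂₂−m₁₁−1)/(m₁₂−m₂₂+2))F₂(m₁₂,m₂₂−1)² = p + 2m₁₂ + 2m₂₂ − 2m₁₁, for all integers m₁₂ > m₂₂ ≥ 1 and any integer m₁₁ with m₁₂ ≥ m₁₁ ≥ m₂₂. -/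
import Mathlib


/-- `E(j) = 1` if `j` is even, `0` otherwise. -/
noncomputable def Efun (j : ℤ) : ℝ := if Even j then 1 else 0

/-- `O(j) = 1` if `j` is odd, `0` otherwise. -/
noncomputable def Ofun (j : ℤ) : ℝ := if Odd j then 1 else 0

/-- The square of the reduced matrix element `F₁`. -/
noncomputable def F1sq (p : ℝ) (m12 m22 : ℤ) : ℝ :=
  ((m12 : ℝ) + 2 + Efun m12 * (p - 2)) *
    ((m12 : ℝ) - m22 + 1) / ((m12 : ℝ) - m22 + 1 + Ofun (m12 - m22))

/-- The square of the reduced matrix element `F₂`. -/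
noncomputable def F2sq (p : ℝ) (m12 m22 : ℤ) : ℝ :=
  ((m22 : ℝ) + 1 + Efun m22 * (p - 2)) *
    ((m12 : ℝ) - m22 + 1) / ((m12 : ℝ) - m22 + 1 - Ofun (m12 - m22))

/-- The second recurrence relation for the reduced matrix elements `F₁`, `F₂`. -/
theorem F1_F2_second_recurrence (p : ℝ) (m12 m22 m11 : ℤ)
    (h1 : 1 ≤ m22) (h2 : m22 < m12) (h3 : m22 ≤ m11) (h4 : m11 ≤ m12) :
    ((m12 : ℝ) - m11 + 1) / ((m12 : ℝ) - m22 + 1) * F1sq p m12 m22 -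
        ((m22 : ℝ) - m11) / ((m12 : ℝ) - m22 + 1) * F2sq p m12 m22 +
        ((m12 : ℝ) - m11) / ((m12 : ℝ) - m22) * F1sq p (m12 - 1) m22 -
        ((m22 : ℝ) - m11 - 1) / ((m12 : ℝ) - m22 + 2) * F2sq p m12 (m22 - 1) =
      p + 2 * m12 + 2 * m22 - 2 * m11 := by
  have hd : (1:ℝ) ≤ (m12:ℝ) - m22 := by
    have h : m22 + 1 ≤ m12 := Int.lt_iff_add_one_le.mp h2
    have h' : ((m22:ℤ):ℝ) + 1 ≤ ((m12:ℤ):ℝ) := by exact_mod_cast h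
    linarith
  have d0 : (m12:ℝ) - m22 ≠ 0 := by linarith
  have d1 : (m12:ℝ) - m22 + 1 ≠ 0 := by linarith
  have d2 : (m12:ℝ) - m22 + 2 ≠ 0 := by linarith
  rcases Int.even_or_odd m12 with h12 | h12 <;>
    rcases Int.even_or_odd m22 with h22 | h22
  · -- EE
    have e12 := Int.even_iff.mp h12
    have e22 := Int.even_iff.mp h22
    have E1 : F1sq p m12 m22 = ((m12:ℝ) + p) * ((m12:ℝ) - m22 + 1) / ((m12:ℝ) - m22 + 1) := by
      unfold F1sq Efun Ofun
      rw [if_pos (show Even m12 by simp only [Int.even_iff, Int.odd_iff]; omega), if_neg (show ¬ Odd (m12 - m22) by simp only [Int.even_iff, Int.odd_iff]; omega)]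
      push_cast; ring
    have E2 : F2sq p m12 m22 = ((m22:ℝ) + p - 1) * ((m12:ℝ) - m22 + 1) / ((m12:ℝ) - m22 + 1) := by
      unfold F2sq Efun Ofun
      rw [if_pos (show Even m22 by simp only [Int.even_iff, Int.odd_iff]; omega), if_neg (show ¬ Odd (m12 - m22) by simp only [Int.even_iff, Int.odd_iff]; omega)]
      push_cast; ring
    have E3 : F1sq p (m12 - 1) m22 = ((m12:ℝ) + 1) * ((m12:ℝ) - m22) / ((m12:ℝ) - m22 + 1) := by
      unfold F1sq Efun Ofun
      rw [if_neg (show ¬ Even (m12 - 1) by simp only [Int.even_iff, Int.odd_iff]; omega), if_pos (show Odd (m12 - 1 - m22) by simp only [Int.even_iff, Int.odd_iff]; omega)]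
      push_cast; ring
    have E4 : F2sq p m12 (m22 - 1) = ((m22:ℝ)) * ((m12:ℝ) - m22 + 2) / ((m12:ℝ) - m22 + 1) := by
      unfold F2sq Efun Ofun
      rw [if_neg (show ¬ Even (m22 - 1) by simp only [Int.even_iff, Int.odd_iff]; omega), if_pos (show Odd (m12 - (m22 - 1)) by simp only [Int.even_iff, Int.odd_iff]; omega)]
      push_cast; ring
    rw [E1, E2, E3, E4]
    field_simp
    ring
  · -- EO
    have e12 := Int.even_iff.mp h12
    have e22 := Int.odd_iff.mp h22
    have E1 : F1sq p m12 m22 = ((m12:ℝ) + p) * ((m12:ℝ) - m22 + 1) / ((m12:ℝ) - m22 + 2) := by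
      unfold F1sq Efun Ofun
      rw [if_pos (show Even m12 by simp only [Int.even_iff, Int.odd_iff]; omega), if_pos (show Odd (m12 - m22) by simp only [Int.even_iff, Int.odd_iff]; omega)]
      push_cast; ring
    have E2 : F2sq p m12 m22 = ((m22:ℝ) + 1) * ((m12:ℝ) - m22 + 1) / ((m12:ℝ) - m22) := by
      unfold F2sq Efun Ofun
      rw [if_neg (show ¬ Even m22 by simp only [Int.even_iff, Int.odd_iff]; omega), if_pos (show Odd (m12 - m22) by simp only [Int.even_iff, Int.odd_iff]; omega)]
      push_cast; ring
    have E3 : F1sq p (m12 - 1) m22 = ((m12:ℝ) + 1) * ((m12:ℝ) - m22) / ((m12:ℝ) - m22) := by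
      unfold F1sq Efun Ofun
      rw [if_neg (show ¬ Even (m12 - 1) by simp only [Int.even_iff, Int.odd_iff]; omega), if_neg (show ¬ Odd (m12 - 1 - m22) by simp only [Int.even_iff, Int.odd_iff]; omega)]
      push_cast; ring
    have E4 : F2sq p m12 (m22 - 1) = ((m22:ℝ) + p - 2) * ((m12:ℝ) - m22 + 2) / ((m12:ℝ) - m22 + 2) := by
      unfold F2sq Efun Ofun
      rw [if_pos (show Even (m22 - 1) by simp only [Int.even_iff, Int.odd_iff]; omega), if_neg (show ¬ Odd (m12 - (m22 - 1)) by simp only [Int.even_iff, Int.odd_iff]; omega)]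
      push_cast; ring
    rw [E1, E2, E3, E4]
    field_simp
    ring
  · -- OE
    have e12 := Int.odd_iff.mp h12
    have e22 := Int.even_iff.mp h22
    have E1 : F1sq p m12 m22 = ((m12:ℝ) + 2) * ((m12:ℝ) - m22 + 1) / ((m12:ℝ) - m22 + 2) := by
      unfold F1sq Efun Ofun
      rw [if_neg (show ¬ Even m12 by simp only [Int.even_iff, Int.odd_iff]; omega), if_pos (show Odd (m12 - m22) by simp only [Int.even_iff, Int.odd_iff]; omega)]
      push_cast; ring
    have E2 : F2sq p m12 m22 = ((m22:ℝ) + p - 1) * ((m12:ℝ) - m22 + 1) / ((m12:ℝ) - m22) := by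
      unfold F2sq Efun Ofun
      rw [if_pos (show Even m22 by simp only [Int.even_iff, Int.odd_iff]; omega), if_pos (show Odd (m12 - m22) by simp only [Int.even_iff, Int.odd_iff]; omega)]
      push_cast; ring
    have E3 : F1sq p (m12 - 1) m22 = ((m12:ℝ) - 1 + p) * ((m12:ℝ) - m22) / ((m12:ℝ) - m22) := by
      unfold F1sq Efun Ofun
      rw [if_pos (show Even (m12 - 1) by simp only [Int.even_iff, Int.odd_iff]; omega), if_neg (show ¬ Odd (m12 - 1 - m22) by simp only [Int.even_iff, Int.odd_iff]; omega)]
      push_cast; ring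
    have E4 : F2sq p m12 (m22 - 1) = ((m22:ℝ)) * ((m12:ℝ) - m22 + 2) / ((m12:ℝ) - m22 + 2) := by
      unfold F2sq Efun Ofun
      rw [if_neg (show ¬ Even (m22 - 1) by simp only [Int.even_iff, Int.odd_iff]; omega), if_neg (show ¬ Odd (m12 - (m22 - 1)) by simp only [Int.even_iff, Int.odd_iff]; omega)]
      push_cast; ring
    rw [E1, E2, E3, E4]
    field_simp
    ring
  · -- OO
    have e12 := Int.odd_iff.mp h12
    have e22 := Int.odd_iff.mp h22
    have E1 : F1sq p m12 m22 = ((m12:ℝ) + 2) * ((m12:ℝ) - m22 + 1) / ((m12:ℝ) - m22 + 1) := by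
      unfold F1sq Efun Ofun
      rw [if_neg (show ¬ Even m12 by simp only [Int.even_iff, Int.odd_iff]; omega), if_neg (show ¬ Odd (m12 - m22) by simp only [Int.even_iff, Int.odd_iff]; omega)]
      push_cast; ring
    have E2 : F2sq p m12 m22 = ((m22:ℝ) + 1) * ((m12:ℝ) - m22 + 1) / ((m12:ℝ) - m22 + 1) := by
      unfold F2sq Efun Ofun
      rw [if_neg (show ¬ Even m22 by simp only [Int.even_iff, Int.odd_iff]; omega), if_neg (show ¬ Odd (m12 - m22) by simp only [Int.even_iff, Int.odd_iff]; omega)]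
      push_cast; ring
    have E3 : F1sq p (m12 - 1) m22 = ((m12:ℝ) - 1 + p) * ((m12:ℝ) - m22) / ((m12:ℝ) - m22 + 1) := by
      unfold F1sq Efun Ofun
      rw [if_pos (show Even (m12 - 1) by simp only [Int.even_iff, Int.odd_iff]; omega), if_pos (show Odd (m12 - 1 - m22) by simp only [Int.even_iff, Int.odd_iff]; omega)]
      push_cast; ring
    have E4 : F2sq p m12 (m22 - 1) = ((m22:ℝ) + p - 2) * ((m12:ℝ) - m22 + 2) / ((m12:ℝ) - m22 + 1) := by
      unfold F2sq Efun Ofun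
      rw [if_pos (show Even (m22 - 1) by simp only [Int.even_iff, Int.odd_iff]; omega), if_pos (show Odd (m12 - (m22 - 1)) by simp only [Int.even_iff, Int.odd_iff]; omega)]
      push_cast; ring
    rw [E1, E2, E3, E4]
    field_simp
    ring
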